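/- Finite-horizon terminal relation: in the finite-horizon LQR with terminal cost P_T = Q, and closed-loop F_{T-1} = A - BK_{T-1} where K_{T-1} = (R + BᵀQB)⁻¹BᵀQA, if R is invertible and R + BᵀQB is invertible, then A = (BR⁻¹BᵀQ + I) F_{T-1}. -/
import Mathlib


open Matrix

theorem finite_horizon_terminal_relation (n m : ℕ)
    (A Q : Matrix (Fin n) (Fin n) ℝ)
    (B : Matrix (Fin n) (Fin m) ℝ) (R : Matrix (Fin m) (Fin m) ℝ)
    (hR : IsUnit R.det) (hRB : IsUnit (R + Bᵀ * Q * B).det)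
    (K : Matrix (Fin m) (Fin n) ℝ) (hK : K = (R + Bᵀ * Q * B)⁻¹ * Bᵀ * Q * A)
    (F : Matrix (Fin n) (Fin n) ℝ) (hF : F = A - B * K) :
    A = (B * R⁻¹ * Bᵀ * Q + 1) * F := by
  subst hF
  have hS : (R + Bᵀ * Q * B) * K = Bᵀ * Q * A := by
    rw [hK, show (R + Bᵀ * Q * B)⁻¹ * Bᵀ * Q * A
        = (R + Bᵀ * Q * B)⁻¹ * (Bᵀ * Q * A) from by
      simp [Matrix.mul_assoc],
      Matrix.mul_nonsing_inv_cancel_left _ _ hRB]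
  have hX : Bᵀ * Q * B * K = Bᵀ * Q * A - R * K := by
    rw [← hS, Matrix.add_mul]; abel
  have hRR : R * R⁻¹ = 1 := Matrix.mul_nonsing_inv R hR
  have hBK : B * (R⁻¹ * (R * K)) = B * K := by
    rw [← Matrix.mul_assoc R⁻¹, Matrix.nonsing_inv_mul R hR, Matrix.one_mul]
  calc A = B * R⁻¹ * (Bᵀ * Q * A) - B * R⁻¹ * (Bᵀ * Q * A - R * K) + A - B * K := by
        rw [Matrix.mul_sub]
        have : B * R⁻¹ * (R * K) = B * K := by rw [Matrix.mul_assoc, hBK]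
        rw [this]; abel
    _ = (B * R⁻¹ * Bᵀ * Q + 1) * (A - B * K) := by
        rw [← hX, Matrix.add_mul, Matrix.one_mul, Matrix.mul_sub]
        simp only [Matrix.mul_assoc, Matrix.mul_sub]
        abel
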